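/- arXiv:1212.6280 — 4 statements merged into one kernel-verified Lean document; each statement's English description precedes it below -/
import Mathlib

section
/- (Bathtub bound) Let p be a probability density on ℝ^d with p(y) ≤ C almost everywhere, and let 0 ≤ a < d. Then ∫_{ℝ^d} p(y)/|y|^a dy ≤ (d/(d−a)) · (C·|S^{d−1}|/d)^{a/d}, where |S^{d−1}| is the surface area of the unit sphere in ℝ^d. -/
/-! Among densities `0 ≤ p ≤ C` of mass one, `∫ p f` for a radially decreasing weight
`f = ‖y‖ ^ (-a)` is largest when all the mass is poured into the ball `B_R` with
`C |B_R| = 1`. Quantitatively, `p f ≤ C 1_{B_R} f + f(R) (p - C 1_{B_R})` pointwise, and the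
last term integrates to zero. Polar coordinates give `∫_{B_R} ‖y‖ ^ (-a) = d |B_1| R^(d-a)/(d-a)`,
and `|B_1| = |S^(d-1)| / d`. -/

open Real MeasureTheory Metric Set Module

theorem integral_mul_le_of_bathtub {α : Type*} [MeasurableSpace α] {μ : Measure α}
    {p f : α → ℝ} {s : Set α} {C t : ℝ}
    (hs : MeasurableSet s) (hμs : μ s ≠ ⊤) (hp : Integrable p μ) (hf : IntegrableOn f s μ)
    (hp0 : ∀ᵐ x ∂μ, 0 ≤ p x) (hpC : ∀ᵐ x ∂μ, p x ≤ C) (hf0 : ∀ᵐ x ∂μ, 0 ≤ f x)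
    (hf_in : ∀ᵐ x ∂μ, x ∈ s → t ≤ f x) (hf_out : ∀ᵐ x ∂μ, x ∉ s → f x ≤ t)
    (hmass : ∫ x, p x ∂μ = C * μ.real s) :
    ∫ x, p x * f x ∂μ ≤ C * ∫ x in s, f x ∂μ := by
  have h1 : Integrable (s.indicator (1 : α → ℝ)) μ :=
    (integrable_indicator_iff hs).2 (integrableOn_const hμs)
  have hf' : Integrable (s.indicator f) μ := (integrable_indicator_iff hs).2 hf
  -- after integration the level `t` multiplies `∫ p - C μ(s) = 0`
  have hpointwise : ∀ᵐ x ∂μ,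
      p x * f x ≤ C * s.indicator f x + t * (p x - C * s.indicator 1 x) := by
    filter_upwards [hp0, hpC, hf_in, hf_out] with x hx0 hxC hx_in hx_out
    by_cases hx : x ∈ s
    · simp only [indicator_of_mem hx, Pi.one_apply]
      nlinarith [hx_in hx]
    · simp only [indicator_of_notMem hx]
      nlinarith [hx_out hx]
  have hg_in : Integrable (fun x => C * s.indicator f x) μ := hf'.const_mul C
  have hg_out : Integrable (fun x => t * (p x - C * s.indicator 1 x)) μ :=
    (hp.sub (h1.const_mul C)).const_mul t
  calc ∫ x, p x * f x ∂μ
      ≤ ∫ x, C * s.indicator f x + t * (p x - C * s.indicator 1 x) ∂μ :=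
        integral_mono_of_nonneg (by filter_upwards [hp0, hf0] with x using mul_nonneg)
          (hg_in.add hg_out) hpointwise
    _ = C * ∫ x in s, f x ∂μ := by
        rw [integral_add hg_in hg_out, integral_const_mul, integral_const_mul,
          integral_sub hp (h1.const_mul C), integral_const_mul, integral_indicator_one hs, hmass,
          integral_indicator hs]
        ring

theorem InnerProductSpace.volume_real_ball_zero_one {E : Type*} [NormedAddCommGroup E]
    [InnerProductSpace ℝ E] [FiniteDimensional ℝ E] [MeasurableSpace E] [BorelSpace E]
    [Nontrivial E] :
    volume.real (ball (0 : E) 1) =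
      2 * π ^ ((finrank ℝ E : ℝ) / 2) / Gamma ((finrank ℝ E : ℝ) / 2) / finrank ℝ E := by
  have hn : (0 : ℝ) < finrank ℝ E := Nat.cast_pos.2 finrank_pos
  have hsqrt : √π ^ finrank ℝ E = π ^ ((finrank ℝ E : ℝ) / 2) := by
    rw [sqrt_eq_rpow, ← rpow_natCast, ← rpow_mul pi_pos.le, one_div_mul_eq_div]
  rw [measureReal_def, volume_ball, ENNReal.ofReal_one, one_pow, one_mul,
    ENNReal.toReal_ofReal (by positivity), hsqrt, Gamma_add_one (by positivity)]
  field_simp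

theorem integral_Ioo_zero_rpow {r R : ℝ} (hr : -1 < r) (hR : 0 ≤ R) :
    ∫ y in Ioo 0 R, y ^ r = R ^ (r + 1) / (r + 1) := by
  rw [← integral_Ioc_eq_integral_Ioo, ← intervalIntegral.integral_of_le hR,
    integral_rpow (Or.inl hr), zero_rpow (by linarith), sub_zero]

section Radial

variable {E : Type*} [NormedAddCommGroup E] [NormedSpace ℝ E] [FiniteDimensional ℝ E]
  [MeasurableSpace E] [BorelSpace E] [Nontrivial E] (μ : Measure E) [μ.IsAddHaarMeasure]

theorem integral_ball_norm_rpow_neg {a R : ℝ} (ha : a < finrank ℝ E) (hR : 0 ≤ R) :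
    ∫ x in ball (0 : E) R, ‖x‖ ^ (-a) ∂μ =
      finrank ℝ E * μ.real (ball 0 1) * (R ^ (finrank ℝ E - a) / (finrank ℝ E - a)) := by
  have hradial : (ball (0 : E) R).indicator (fun x => ‖x‖ ^ (-a)) =
      fun x => (Iio R).indicator (fun r => r ^ (-a)) ‖x‖ := by
    ext x
    by_cases hx : ‖x‖ < R <;> simp [indicator, hx]
  have hpolar : ∫ y in Ioi 0, y ^ (finrank ℝ E - 1) • (Iio R).indicator (fun r => r ^ (-a)) y =
      ∫ y in Ioo 0 R, y ^ ((finrank ℝ E : ℝ) - a - 1) := by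
    simp_rw [smul_eq_mul, ← indicator_mul_right (Iio R) (fun y : ℝ => y ^ (finrank ℝ E - 1))]
    rw [setIntegral_indicator measurableSet_Iio, Ioi_inter_Iio]
    refine setIntegral_congr_fun measurableSet_Ioo fun y hy => ?_
    rw [← rpow_natCast, ← rpow_add hy.1, Nat.cast_sub finrank_pos]
    ring_nf
  rw [← integral_indicator measurableSet_ball, hradial, integral_fun_norm_addHaar, hpolar,
    integral_Ioo_zero_rpow (by linarith) hR, sub_add_cancel, nsmul_eq_mul, smul_eq_mul, mul_assoc]

theorem addHaar_real_ball_zero {R : ℝ} (hR : 0 ≤ R) :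
    μ.real (ball (0 : E) R) = R ^ finrank ℝ E * μ.real (ball 0 1) := by
  rw [measureReal_def, Measure.addHaar_ball μ 0 hR, ENNReal.toReal_mul,
    ENNReal.toReal_ofReal (by positivity), measureReal_def]

theorem integral_div_norm_rpow_le_of_mass_ball {p : E → ℝ} {a C R : ℝ} (ha : 0 ≤ a)
    (had : a < finrank ℝ E) (hR : 0 < R) (hp0 : ∀ᵐ x ∂μ, 0 ≤ p x) (hpC : ∀ᵐ x ∂μ, p x ≤ C)
    (hp : Integrable p μ) (hmass : ∫ x, p x ∂μ = C * μ.real (ball (0 : E) R)) :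
    ∫ x, p x / ‖x‖ ^ a ∂μ ≤ C * ∫ x in ball 0 R, ‖x‖ ^ (-a) ∂μ := by
  have hf_in : ∀ᵐ x ∂μ, x ∈ ball (0 : E) R → R ^ (-a) ≤ ‖x‖ ^ (-a) := by
    filter_upwards [Measure.ae_ne μ 0] with x hx hxR
    exact rpow_le_rpow_of_nonpos (norm_pos_iff.2 hx) (mem_ball_zero_iff.1 hxR).le
      (neg_nonpos.2 ha)
  have hf_out : ∀ᵐ x ∂μ, x ∉ ball (0 : E) R → ‖x‖ ^ (-a) ≤ R ^ (-a) :=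
    .of_forall fun x hxR =>
      rpow_le_rpow_of_nonpos hR (not_lt.1 (mt mem_ball_zero_iff.2 hxR)) (neg_nonpos.2 ha)
  have hf : IntegrableOn (fun x => ‖x‖ ^ (-a)) (ball (0 : E) R) μ :=
    integrableOn_ball_of_norm_le_rpow finrank_pos had (C := 1)
      (.of_forall fun x => by rw [one_mul, norm_of_nonneg (rpow_nonneg (norm_nonneg x) _)])
      (measurable_norm.pow_const (-a)).aestronglyMeasurable
  simp_rw [div_eq_mul_inv, ← rpow_neg (norm_nonneg _)]
  exact integral_mul_le_of_bathtub measurableSet_ball measure_ball_lt_top.ne hp hf hp0 hpC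
    (.of_forall fun x => rpow_nonneg (norm_nonneg x) _) hf_in hf_out hmass

theorem integral_div_norm_rpow_le {p : E → ℝ} {a C : ℝ} (ha : 0 ≤ a) (had : a < finrank ℝ E)
    (hp0 : ∀ᵐ x ∂μ, 0 ≤ p x) (hpC : ∀ᵐ x ∂μ, p x ≤ C) (hp1 : ∫ x, p x ∂μ = 1) :
    ∫ x, p x / ‖x‖ ^ a ∂μ ≤
      finrank ℝ E / (finrank ℝ E - a) * (C * μ.real (ball 0 1)) ^ (a / finrank ℝ E) := by
  set n : ℝ := (finrank ℝ E : ℝ)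
  have hn : 0 < n := Nat.cast_pos.2 finrank_pos
  have hC : 0 < C := by
    by_contra! hC
    have : ∫ x, p x ∂μ = 0 := integral_eq_zero_of_ae <| by
      filter_upwards [hp0, hpC] with x hx0 hxC using le_antisymm (hxC.trans hC) hx0
    simp [this] at hp1
  set K := C * μ.real (ball 0 1)
  have hK : 0 < K := mul_pos hC <|
    ENNReal.toReal_pos (measure_ball_pos μ 0 one_pos).ne' measure_ball_lt_top.ne
  -- the ball of radius `R` holds exactly mass one at height `C`
  set R := K ^ (-1 / n)
  have hR : 0 < R := by positivity
  have hmass : ∫ x, p x ∂μ = C * μ.real (ball (0 : E) R) := by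
    rw [hp1, addHaar_real_ball_zero μ hR.le, ← rpow_natCast, ← rpow_mul hK.le,
      div_mul_cancel₀ _ hn.ne', rpow_neg_one, mul_left_comm]
    exact (inv_mul_cancel₀ hK.ne').symm
  have hKR : K * R ^ (n - a) = K ^ (a / n) := by
    rw [← rpow_mul hK.le, show a / n = 1 + -1 / n * (n - a) by field_simp; ring,
      rpow_add hK, rpow_one]
  calc ∫ x, p x / ‖x‖ ^ a ∂μ ≤ C * ∫ x in ball 0 R, ‖x‖ ^ (-a) ∂μ :=
        integral_div_norm_rpow_le_of_mass_ball μ ha had hR hp0 hpC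
          (.of_integral_ne_zero (by simp [hp1])) hmass
    _ = n / (n - a) * (K * R ^ (n - a)) := by
        rw [integral_ball_norm_rpow_neg μ had hR.le]
        ring
    _ = n / (n - a) * K ^ (a / n) := by rw [hKR]

end Radial

theorem bathtub_bound_general (d : ℕ) (a C : ℝ) (ha : 0 ≤ a) (had : a < d)
    (p : EuclideanSpace ℝ (Fin d) → ℝ)
    (hnn : ∀ y, 0 ≤ p y) (hnorm : ∫ y, p y = 1)
    (hC : ∀ᵐ y : EuclideanSpace ℝ (Fin d), p y ≤ C) :
    ∫ y : EuclideanSpace ℝ (Fin d), p y / ‖y‖ ^ a ≤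
      ((d : ℝ) / ((d : ℝ) - a)) *
        (C * (2 * Real.pi ^ ((d : ℝ) / 2) / Real.Gamma ((d : ℝ) / 2)) / d) ^ (a / (d : ℝ)) := by
  have : Nontrivial (EuclideanSpace ℝ (Fin d)) :=
    Module.nontrivial_of_finrank_pos (R := ℝ) <| by
      rw [finrank_euclideanSpace_fin]; exact_mod_cast ha.trans_lt had
  have h := integral_div_norm_rpow_le volume ha (by rwa [finrank_euclideanSpace_fin])
    (.of_forall hnn) hC hnorm
  rwa [InnerProductSpace.volume_real_ball_zero_one, finrank_euclideanSpace_fin, ← mul_div_assoc]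
    at h

/-- Bathtub bound: if `p` is a probability density on `ℝ^d` with `p ≤ C` a.e.
and `0 ≤ a < d`, then `∫ p(y)/|y|^a dy ≤ (d/(d−a)) (C |S^{d-1}| / d)^{a/d}`,
where `|S^{d-1}| = 2π^{d/2}/Γ(d/2)`. -/
theorem bathtub_bound (d : ℕ) (hd : 1 ≤ d) (a C : ℝ) (ha : 0 ≤ a) (had : a < d)
    (p : EuclideanSpace ℝ (Fin d) → ℝ) (hmeas : Measurable p)
    (hnn : ∀ y, 0 ≤ p y) (hnorm : ∫ y, p y = 1)
    (hC : ∀ᵐ y : EuclideanSpace ℝ (Fin d), p y ≤ C) :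
    ∫ y : EuclideanSpace ℝ (Fin d), p y / ‖y‖ ^ a ≤
      ((d : ℝ) / ((d : ℝ) - a)) *
        (C * (2 * Real.pi ^ ((d : ℝ) / 2) / Real.Gamma ((d : ℝ) / 2)) / d) ^ (a / (d : ℝ)) :=
  bathtub_bound_general d a C ha had p hnn hnorm hC
end

section
/- If p is a probability density on ℝ^d bounded by C with ∫ |y|² p(y) dy = m < ∞, then the second moments m_N := ∫ |w|² γ_N(w) dw of the tilted densities γ_N(w) := p(w)|w|^{−a/N} / ∫ p(w')|w'|^{−a/N} dw' (for fixed a > 0) converge to m as N → ∞. -/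
/-!
For `0 ≤ t ≤ s` the weight `‖w‖ ^ (-t)` is at most `1 + ‖w‖ ^ (-s)`. Since `p` is bounded and
`‖·‖ ^ (-s)` is locally integrable for `s < d`, the function `p ‖·‖ ^ (-s)` is integrable, and so is
`‖·‖² p ‖·‖ ^ (-s)`. Dominated convergence then sends the numerator and the denominator of the
tilted second moment to `m` and `1` as the exponent `a / N` decreases to `0`.
-/

open Real MeasureTheory Filter Set Metric Topology

lemma Real.rpow_neg_le_one_add_rpow_neg {x s t : ℝ} (hx : 0 < x) (ht : 0 ≤ t) (hts : t ≤ s) :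
    x ^ (-t) ≤ 1 + x ^ (-s) := by
  rcases le_total x 1 with hx1 | hx1
  · linarith [rpow_le_rpow_of_exponent_ge hx hx1 (neg_le_neg hts), rpow_nonneg hx.le 1]
  · linarith [rpow_le_one_of_one_le_of_nonpos hx1 (neg_nonpos.2 ht), rpow_nonneg hx.le (-s)]

section NormRpow

variable {E : Type*} [NormedAddCommGroup E] [MeasurableSpace E] [OpensMeasurableSpace E]
  {μ : Measure E} {f : E → ℝ} {s : ℝ}

theorem tendsto_integral_mul_norm_rpow_neg [NullSingletonClass μ] (hs : 0 < s)
    (hf : Integrable f μ) (hfs : Integrable (fun w => f w * ‖w‖ ^ (-s)) μ) :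
    Tendsto (fun t : ℝ => ∫ w, f w * ‖w‖ ^ (-t) ∂μ) (𝓝[≥] 0) (𝓝 (∫ w, f w ∂μ)) := by
  -- `t ↦ 0 ^ (-t)` jumps from `1` to `0` at `t = 0`, so convergence only holds off `w = 0`.
  have hne : ∀ᵐ w ∂μ, w ≠ 0 := measure_eq_zero_iff_ae_notMem.1 (measure_singleton 0)
  refine tendsto_integral_filter_of_dominated_convergence (fun w => ‖f w‖ + ‖f w * ‖w‖ ^ (-s)‖)
    (Eventually.of_forall fun t => hf.aestronglyMeasurable.mul
      (by fun_prop : Measurable fun w : E => ‖w‖ ^ (-t)).aestronglyMeasurable)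
    ?_ (hf.norm.add hfs.norm) ?_
  · filter_upwards [Icc_mem_nhdsGE hs] with t ht
    filter_upwards [hne] with w hw
    have hw' : 0 < ‖w‖ := norm_pos_iff.2 hw
    rw [norm_mul, norm_mul, norm_of_nonneg (rpow_nonneg hw'.le _),
      norm_of_nonneg (rpow_nonneg hw'.le _)]
    nlinarith [rpow_neg_le_one_add_rpow_neg hw' ht.1 ht.2, norm_nonneg (f w)]
  · filter_upwards [hne] with w hw
    have hcont : ContinuousAt (fun t : ℝ => ‖w‖ ^ (-t)) 0 :=
      (continuousAt_const_rpow (norm_ne_zero_iff.2 hw)).comp continuousAt_neg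
    simpa using (hcont.tendsto.mono_left nhdsWithin_le_nhds).const_mul (f w)

variable [NormedSpace ℝ E] [FiniteDimensional ℝ E] [BorelSpace E] [μ.IsAddHaarMeasure] {C : ℝ}

theorem integrable_mul_norm_rpow_neg (hE : 1 ≤ Module.finrank ℝ E) (hs0 : 0 ≤ s)
    (hsE : s < Module.finrank ℝ E) (hf : Integrable f μ) (hC : ∀ w ∈ ball (0 : E) 1, ‖f w‖ ≤ C) :
    Integrable (fun w => f w * ‖w‖ ^ (-s)) μ := by
  have hmeas : AEStronglyMeasurable (fun w => f w * ‖w‖ ^ (-s)) μ :=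
    hf.aestronglyMeasurable.mul
      (by fun_prop : Measurable fun w : E => ‖w‖ ^ (-s)).aestronglyMeasurable
  rw [← integrableOn_univ, ← union_compl_self (ball (0 : E) 1)]
  refine IntegrableOn.union ?_ ?_
  · refine integrableOn_ball_of_norm_le_rpow (C := C) hE hsE
      (ae_restrict_of_forall_mem measurableSet_ball fun w hw => ?_) hmeas
    rw [norm_mul, norm_of_nonneg (rpow_nonneg (norm_nonneg w) _)]
    exact mul_le_mul_of_nonneg_right (hC w hw) (rpow_nonneg (norm_nonneg w) _)
  · refine hf.norm.integrableOn.mono' hmeas.restrict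
      (ae_restrict_of_forall_mem measurableSet_ball.compl fun w hw => ?_)
    have hw1 : 1 ≤ ‖w‖ := by simpa using hw
    rw [norm_mul, norm_of_nonneg (rpow_nonneg (norm_nonneg w) _)]
    exact mul_le_of_le_one_right (norm_nonneg (f w))
      (rpow_le_one_of_one_le_of_nonpos hw1 (neg_nonpos.2 hs0))

end NormRpow

theorem tilted_second_moment_tendsto_general (d : ℕ) (hd : 1 ≤ d) (a C : ℝ) (ha : 0 < a)
    (p : EuclideanSpace ℝ (Fin d) → ℝ)
    (hnn : ∀ y, 0 ≤ p y) (hC : ∀ y, p y ≤ C) (hnorm : ∫ y, p y = 1)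
    (m : ℝ) (h2 : Integrable fun y : EuclideanSpace ℝ (Fin d) => ‖y‖ ^ 2 * p y)
    (hm : m = ∫ y : EuclideanSpace ℝ (Fin d), ‖y‖ ^ 2 * p y) :
    Tendsto (fun N : ℕ =>
        (∫ w : EuclideanSpace ℝ (Fin d), ‖w‖ ^ 2 * (p w * ‖w‖ ^ (-(a / (N : ℝ))))) /
          ∫ w : EuclideanSpace ℝ (Fin d), p w * ‖w‖ ^ (-(a / (N : ℝ))))
      atTop (nhds m) := by
  have : Nonempty (Fin d) := ⟨⟨0, hd⟩⟩
  have hdim : 1 ≤ Module.finrank ℝ (EuclideanSpace ℝ (Fin d)) := by simpa using hd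
  have hhalf : (1 / 2 : ℝ) < Module.finrank ℝ (EuclideanSpace ℝ (Fin d)) := by
    simp only [finrank_euclideanSpace, Fintype.card_fin]
    exact lt_of_lt_of_le (by norm_num) (Nat.one_le_cast.2 hd)
  have hp : Integrable p := .of_integral_ne_zero (by simp [hnorm])
  have hp_le : ∀ w, ‖p w‖ ≤ C := fun w => (norm_of_nonneg (hnn w)).trans_le (hC w)
  have hden := tendsto_integral_mul_norm_rpow_neg one_half_pos hp
    (integrable_mul_norm_rpow_neg hdim one_half_pos.le hhalf hp fun w _ => hp_le w)
  have hnum := tendsto_integral_mul_norm_rpow_neg one_half_pos h2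
    (integrable_mul_norm_rpow_neg (C := C) hdim one_half_pos.le hhalf h2 fun w hw => by
      have hw1 : ‖w‖ ^ 2 ≤ 1 := pow_le_one₀ (norm_nonneg w) (mem_ball_zero_iff.1 hw).le
      rw [norm_mul, norm_pow, norm_norm]
      nlinarith [hp_le w, norm_nonneg (p w)])
  have hexp : Tendsto (fun N : ℕ => a / N) atTop (𝓝[≥] 0) :=
    tendsto_nhdsWithin_iff.2 ⟨tendsto_const_div_atTop_nhds_zero_nat a,
      Eventually.of_forall fun N => div_nonneg ha.le N.cast_nonneg⟩
  rw [hnorm] at hden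
  rw [← hm] at hnum
  simpa only [Function.comp_def, Pi.div_def, mul_assoc, div_one] using
    (hnum.comp hexp).div (hden.comp hexp) one_ne_zero

/-- The second moments of the tilted densities
`γ_N(w) = p(w)|w|^{-a/N} / ∫ p|·|^{-a/N}` converge to the second moment of `p`. -/
theorem tilted_second_moment_tendsto (d : ℕ) (hd : 1 ≤ d) (a C : ℝ) (ha : 0 < a)
    (p : EuclideanSpace ℝ (Fin d) → ℝ) (hmeas : Measurable p)
    (hnn : ∀ y, 0 ≤ p y) (hC : ∀ y, p y ≤ C) (hnorm : ∫ y, p y = 1)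
    (m : ℝ) (h2 : Integrable fun y : EuclideanSpace ℝ (Fin d) => ‖y‖ ^ 2 * p y)
    (hm : m = ∫ y : EuclideanSpace ℝ (Fin d), ‖y‖ ^ 2 * p y) :
    Tendsto (fun N : ℕ =>
        (∫ w : EuclideanSpace ℝ (Fin d), ‖w‖ ^ 2 * (p w * ‖w‖ ^ (-(a / (N : ℝ))))) /
          ∫ w : EuclideanSpace ℝ (Fin d), p w * ‖w‖ ^ (-(a / (N : ℝ))))
      atTop (nhds m) :=
  tilted_second_moment_tendsto_general d hd a C ha p hnn hC hnorm m h2 hm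
end

section
/- (Jacobian of the mixing change of variables) Fix integers N > k ≥ 1, d ≥ 1. Define the map Φ on vectors Y = (Y_k, Y^k) ∈ ℝ^{dk} × ℝ^{d(N−k)} (with Y ≠ 0, Y^k ≠ 0) by Φ(Y) = (V_k, W^k) where V_k = (√N/|Y|) Y_k and W^k = Y^k. Then |V_k|² = N|Y_k|²/|Y|² < N, and the absolute value of the Jacobian determinant of Φ at Y equals (√N/|Y|)^{dk} · |Y^k|²/|Y|². -/
/-!
Write `Φ(Y) = (g(Y) • Y₁, Y₂)` with `g = √N / |Y|`. The differential of `Φ` at `Y` is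
`(x₁, x₂) ↦ (g x₁ + Dg(x) Y₁, x₂)`: the dilation by `g` on the first factor followed by the
transvection `z ↦ z + ℓ(z) (Y₁, 0)` with `ℓ = Dg ∘ (g⁻¹ ⊕ 1)`. Its determinant is therefore
`g^{dk} (1 + g⁻¹ Dg(Y₁, 0))`, and `Dg = -(g / |Y|²) ⟨Y, ·⟩` turns the second factor into
`1 - |Y₁|² / |Y|² = |Y₂|² / |Y|²`.
-/

open Module

theorem LinearMap.det_prod_smul_add_smulRight {K E F : Type*} [Field K] [AddCommGroup E]
    [Module K E] [FiniteDimensional K E] [AddCommGroup F] [Module K F] [FiniteDimensional K F]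
    {c : K} (hc : c ≠ 0) (ℓ : Dual K (E × F)) (u : E) :
    LinearMap.det ((c • LinearMap.fst K E F + ℓ.smulRight u).prod (LinearMap.snd K E F)) =
      c ^ finrank K E * (1 + c⁻¹ * ℓ (u, 0)) := by
  have hfactor : (c • LinearMap.fst K E F + ℓ.smulRight u).prod (LinearMap.snd K E F) =
      transvection (ℓ ∘ₗ (c⁻¹ • LinearMap.id).prodMap LinearMap.id) (u, 0) ∘ₗ
        (c • LinearMap.id).prodMap LinearMap.id := by
    ext x <;> simp [transvection.apply, smul_smul, hc]
  rw [hfactor, det_comp, transvection.det, det_prodMap, det_smul, det_id, det_id]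
  have hu : ((c⁻¹ • u, 0) : E × F) = c⁻¹ • (u, 0) := by simp
  rw [coe_comp, Function.comp_apply, prodMap_apply, smul_apply, id_apply, id_apply, hu,
    map_smul, smul_eq_mul]
  ring

section

variable {E F : Type*} [NormedAddCommGroup E] [InnerProductSpace ℝ E]
  [NormedAddCommGroup F] [InnerProductSpace ℝ F]

open ContinuousLinearMap

theorem hasFDerivAt_prod_normSq (Y : E × F) :
    HasFDerivAt (fun Z : E × F => ‖Z.1‖ ^ 2 + ‖Z.2‖ ^ 2)
      (2 • ((innerSL ℝ Y.1).comp (fst ℝ E F) + (innerSL ℝ Y.2).comp (snd ℝ E F))) Y := by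
  rw [smul_add]
  exact hasFDerivAt_fst.norm_sq.add hasFDerivAt_snd.norm_sq

theorem hasFDerivAt_div_sqrt_prod_normSq (a : ℝ) {Y : E × F} (hY : 0 < ‖Y.1‖ ^ 2 + ‖Y.2‖ ^ 2) :
    HasFDerivAt (fun Z : E × F => a / √(‖Z.1‖ ^ 2 + ‖Z.2‖ ^ 2))
      (-(a / √(‖Y.1‖ ^ 2 + ‖Y.2‖ ^ 2) / (‖Y.1‖ ^ 2 + ‖Y.2‖ ^ 2)) •
        ((innerSL ℝ Y.1).comp (fst ℝ E F) + (innerSL ℝ Y.2).comp (snd ℝ E F))) Y := by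
  set q := ‖Y.1‖ ^ 2 + ‖Y.2‖ ^ 2
  have h := ((hasDerivAt_const q a).div (Real.hasDerivAt_sqrt hY.ne')
    (Real.sqrt_ne_zero'.mpr hY)).comp_hasFDerivAt Y
    (hasFDerivAt_prod_normSq Y)
  refine h.congr_fderiv ?_
  rw [← Nat.cast_smul_eq_nsmul ℝ 2, smul_smul]
  congr 1
  field_simp
  rw [Real.sq_sqrt hY.le]
  ring

theorem hasFDerivAt_smul_fst_prod_snd (a : ℝ) {Y : E × F} (hY : 0 < ‖Y.1‖ ^ 2 + ‖Y.2‖ ^ 2) :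
    HasFDerivAt (fun Z : E × F => ((a / √(‖Z.1‖ ^ 2 + ‖Z.2‖ ^ 2)) • Z.1, Z.2))
      (((a / √(‖Y.1‖ ^ 2 + ‖Y.2‖ ^ 2)) • fst ℝ E F +
        ((-(a / √(‖Y.1‖ ^ 2 + ‖Y.2‖ ^ 2) / (‖Y.1‖ ^ 2 + ‖Y.2‖ ^ 2)) •
          ((innerSL ℝ Y.1).comp (fst ℝ E F) + (innerSL ℝ Y.2).comp (snd ℝ E F))).smulRight
            Y.1)).prod (snd ℝ E F)) Y :=
  ((hasFDerivAt_div_sqrt_prod_normSq a hY).smul hasFDerivAt_fst).prodMk hasFDerivAt_snd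

theorem norm_sqrt_div_sqrt_smul_sq {a b : ℝ} (ha : 0 ≤ a) (hb : 0 ≤ b) (v : E) :
    ‖(√a / √b) • v‖ ^ 2 = a * ‖v‖ ^ 2 / b := by
  rw [norm_smul, mul_pow, Real.norm_eq_abs, sq_abs, div_pow, Real.sq_sqrt ha, Real.sq_sqrt hb]
  ring

theorem det_fderiv_smul_fst_prod_snd [FiniteDimensional ℝ E] [FiniteDimensional ℝ F] {a : ℝ}
    (ha : a ≠ 0) {Y : E × F} (hY : 0 < ‖Y.1‖ ^ 2 + ‖Y.2‖ ^ 2) :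
    LinearMap.det (fderiv ℝ (fun Z : E × F => ((a / √(‖Z.1‖ ^ 2 + ‖Z.2‖ ^ 2)) • Z.1, Z.2)) Y :
      E × F →ₗ[ℝ] E × F) =
      (a / √(‖Y.1‖ ^ 2 + ‖Y.2‖ ^ 2)) ^ finrank ℝ E * (‖Y.2‖ ^ 2 / (‖Y.1‖ ^ 2 + ‖Y.2‖ ^ 2)) := by
  have hc : a / √(‖Y.1‖ ^ 2 + ‖Y.2‖ ^ 2) ≠ 0 := div_ne_zero ha (Real.sqrt_ne_zero'.mpr hY)
  rw [(hasFDerivAt_smul_fst_prod_snd a hY).fderiv]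
  refine (LinearMap.det_prod_smul_add_smulRight hc (ContinuousLinearMap.toLinearMap _) Y.1).trans ?_
  set q := ‖Y.1‖ ^ 2 + ‖Y.2‖ ^ 2
  set c := a / √q
  have hℓ : (-(c / q) • ((innerSL ℝ Y.1).comp (fst ℝ E F) + (innerSL ℝ Y.2).comp (snd ℝ E F)))
      (Y.1, 0) = -(c / q) * ‖Y.1‖ ^ 2 := by
    simp
  rw [ContinuousLinearMap.coe_coe, hℓ]
  field_simp
  ring

end

theorem mixing_change_of_variables_jacobian_general (d k N : ℕ)
    (hkN : k < N)
    (Φ : EuclideanSpace ℝ (Fin (d * k)) × EuclideanSpace ℝ (Fin (d * (N - k))) →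
         EuclideanSpace ℝ (Fin (d * k)) × EuclideanSpace ℝ (Fin (d * (N - k))))
    (hΦ : ∀ Y, Φ Y =
      ((Real.sqrt N / Real.sqrt (‖Y.1‖ ^ 2 + ‖Y.2‖ ^ 2)) • Y.1, Y.2))
    (Y : EuclideanSpace ℝ (Fin (d * k)) × EuclideanSpace ℝ (Fin (d * (N - k))))
    (hY2 : Y.2 ≠ 0) :
    ‖(Φ Y).1‖ ^ 2 = N * ‖Y.1‖ ^ 2 / (‖Y.1‖ ^ 2 + ‖Y.2‖ ^ 2) ∧
    ‖(Φ Y).1‖ ^ 2 < N ∧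
    |LinearMap.det ((fderiv ℝ Φ Y :
        EuclideanSpace ℝ (Fin (d * k)) × EuclideanSpace ℝ (Fin (d * (N - k))) →L[ℝ]
        EuclideanSpace ℝ (Fin (d * k)) × EuclideanSpace ℝ (Fin (d * (N - k)))) :
        EuclideanSpace ℝ (Fin (d * k)) × EuclideanSpace ℝ (Fin (d * (N - k))) →ₗ[ℝ]
        EuclideanSpace ℝ (Fin (d * k)) × EuclideanSpace ℝ (Fin (d * (N - k))))| =
      (Real.sqrt N / Real.sqrt (‖Y.1‖ ^ 2 + ‖Y.2‖ ^ 2)) ^ (d * k) *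
        (‖Y.2‖ ^ 2 / (‖Y.1‖ ^ 2 + ‖Y.2‖ ^ 2)) := by
  have hY2pos : 0 < ‖Y.2‖ := norm_pos_iff.mpr hY2
  have hq : 0 < ‖Y.1‖ ^ 2 + ‖Y.2‖ ^ 2 := by positivity
  have hN : (0 : ℝ) < N := by exact_mod_cast Nat.zero_lt_of_lt hkN
  have hnorm : ‖(Φ Y).1‖ ^ 2 = N * ‖Y.1‖ ^ 2 / (‖Y.1‖ ^ 2 + ‖Y.2‖ ^ 2) := by
    rw [hΦ]
    exact norm_sqrt_div_sqrt_smul_sq hN.le hq.le Y.1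
  refine ⟨hnorm, ?_, ?_⟩
  · rw [hnorm, div_lt_iff₀ hq]
    exact mul_lt_mul_of_pos_left (lt_add_of_pos_right _ (pow_pos hY2pos 2)) hN
  · rw [funext hΦ, det_fderiv_smul_fst_prod_snd (Real.sqrt_ne_zero'.mpr hN) hq,
      finrank_euclideanSpace_fin, abs_of_pos]
    positivity

/-- Jacobian of the mixing change of variables: for
`Φ(Y_k, Y^k) = ((√N/|Y|) Y_k, Y^k)` (with `|Y|² = |Y_k|² + |Y^k|²`), one has
`|V_k|² = N |Y_k|²/|Y|² < N` and the absolute value of the Jacobian determinant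
equals `(√N/|Y|)^{dk} · |Y^k|²/|Y|²`. -/
theorem mixing_change_of_variables_jacobian (d k N : ℕ) (hd : 1 ≤ d) (hk : 1 ≤ k)
    (hkN : k < N)
    (Φ : EuclideanSpace ℝ (Fin (d * k)) × EuclideanSpace ℝ (Fin (d * (N - k))) →
         EuclideanSpace ℝ (Fin (d * k)) × EuclideanSpace ℝ (Fin (d * (N - k))))
    (hΦ : ∀ Y, Φ Y =
      ((Real.sqrt N / Real.sqrt (‖Y.1‖ ^ 2 + ‖Y.2‖ ^ 2)) • Y.1, Y.2))
    (Y : EuclideanSpace ℝ (Fin (d * k)) × EuclideanSpace ℝ (Fin (d * (N - k))))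
    (hY : Y ≠ 0) (hY2 : Y.2 ≠ 0) :
    ‖(Φ Y).1‖ ^ 2 = N * ‖Y.1‖ ^ 2 / (‖Y.1‖ ^ 2 + ‖Y.2‖ ^ 2) ∧
    ‖(Φ Y).1‖ ^ 2 < N ∧
    |LinearMap.det ((fderiv ℝ Φ Y :
        EuclideanSpace ℝ (Fin (d * k)) × EuclideanSpace ℝ (Fin (d * (N - k))) →L[ℝ]
        EuclideanSpace ℝ (Fin (d * k)) × EuclideanSpace ℝ (Fin (d * (N - k)))) :
        EuclideanSpace ℝ (Fin (d * k)) × EuclideanSpace ℝ (Fin (d * (N - k))) →ₗ[ℝ]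
        EuclideanSpace ℝ (Fin (d * k)) × EuclideanSpace ℝ (Fin (d * (N - k))))| =
      (Real.sqrt N / Real.sqrt (‖Y.1‖ ^ 2 + ‖Y.2‖ ^ 2)) ^ (d * k) *
        (‖Y.2‖ ^ 2 / (‖Y.1‖ ^ 2 + ‖Y.2‖ ^ 2)) :=
  mixing_change_of_variables_jacobian_general d k N hkN Φ hΦ Y hY2
end

section
/- (Normalization constant as a full-space integral) With g(w) = e^{−|w|^{2+α}}/c the normalized density on ℝ^d and Z_N := c^{−N} ∫_{S^{dN−1}(√N)} (Σ_{i=1}^N |v_i|^{2+α})^{−(dN−1)/(2+α)} dσ(V), one has Z_N = ((2+α)/Γ((dN−1)/(2+α))) ∫_{ℝ^{dN}} (∏_{i=1}^N g(w_i)) / |W| dW. -/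
/-!
Up to the factor `c ^ N`, the integrand on the right is `exp (-h W) / ‖W‖` with
`h W = ∑ i, ‖W i‖ ^ q`, `q = 2 + α`, and `h` is positively homogeneous of degree `q`.
In polar coordinates `W = r • ω` the radial integral `∫₀^∞ r ^ (dN - 2) exp (-r ^ q h ω) dr`
is `Γ(s) h(ω) ^ (-s) / q` with `s = (dN - 1) / q`, so the full-space integral is `Γ(s) / q`
times the integral of `h ^ (-s)` over the unit sphere. Rescaling the unit sphere to radius
`√N` multiplies `h ^ (-s)` by `√N ^ (1 - dN)`, which the Jacobian `√N ^ (dN - 1)` cancels.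
-/

open Real MeasureTheory Set Metric
open scoped ENNReal

section Curry

variable {ι κ : Type*}

theorem MeasurableEquiv.measurePreserving_curry [Fintype ι] [Fintype κ] {X : Type*}
    [MeasurableSpace X] (μ : Measure X) [SigmaFinite μ] :
    MeasurePreserving (MeasurableEquiv.curry ι κ X) (Measure.pi fun _ => μ)
      (Measure.pi fun _ => Measure.pi fun _ => μ) := by
  let e := MeasurableEquiv.curry ι κ X
  refine MeasurePreserving.symm e.symm ⟨e.symm.measurable, (Measure.pi_eq fun s hs => ?_).symm⟩
  have hpre : e.symm ⁻¹' univ.pi s = univ.pi fun i => univ.pi fun j => s (i, j) := by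
    ext f
    simp [e, MeasurableEquiv.coe_curry_symm]
  rw [Measure.map_apply e.symm.measurable (.univ_pi hs), hpre, Measure.pi_pi]
  simp_rw [Measure.pi_pi]
  exact (Fintype.prod_prod_type fun p => μ (s p)).symm

variable (ι κ)

noncomputable def EuclideanSpace.curryMeasurableEquiv :
    EuclideanSpace ℝ (ι × κ) ≃ᵐ (ι → EuclideanSpace ℝ κ) :=
  (MeasurableEquiv.toLp 2 _).symm.trans ((MeasurableEquiv.curry ι κ ℝ).trans
    (MeasurableEquiv.piCongrRight fun _ => MeasurableEquiv.toLp 2 _))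

variable {ι κ}

namespace EuclideanSpace

@[simp]
theorem curryMeasurableEquiv_apply (x : EuclideanSpace ℝ (ι × κ)) (i : ι) (j : κ) :
    curryMeasurableEquiv ι κ x i j = x (i, j) := rfl

theorem curryMeasurableEquiv_smul (r : ℝ) (x : EuclideanSpace ℝ (ι × κ)) :
    curryMeasurableEquiv ι κ (r • x) = r • curryMeasurableEquiv ι κ x := rfl

theorem norm_curryMeasurableEquiv_apply [Fintype κ] (x : EuclideanSpace ℝ (ι × κ)) (i : ι) :
    ‖curryMeasurableEquiv ι κ x i‖ = √(∑ j, x (i, j) ^ 2) := by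
  simp [EuclideanSpace.norm_eq]

variable [Fintype ι] [Fintype κ]

theorem measurePreserving_curryMeasurableEquiv :
    MeasurePreserving (curryMeasurableEquiv ι κ) :=
  ((measurePreserving_pi _ _ fun _ => (volume_preserving_symm_measurableEquiv_toLp κ).symm).comp
    (MeasurableEquiv.measurePreserving_curry volume)).comp
    (volume_preserving_symm_measurableEquiv_toLp _)

theorem sum_norm_curryMeasurableEquiv_sq (x : EuclideanSpace ℝ (ι × κ)) :
    ∑ i, ‖curryMeasurableEquiv ι κ x i‖ ^ 2 = ‖x‖ ^ 2 := by
  simp [EuclideanSpace.norm_sq_eq, Fintype.sum_prod_type]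

end EuclideanSpace

end Curry

theorem lintegral_Ioi_pow_mul_exp_neg_rpow_mul_div {n : ℕ} (hn : 2 ≤ n) {q b : ℝ} (hq : 0 < q)
    (hb : 0 < b) :
    ∫⁻ r in Ioi (0 : ℝ),
        ENNReal.ofReal (r ^ (n - 1)) * ENNReal.ofReal (exp (-(r ^ q * b)) / r) =
      ENNReal.ofReal (b ^ (-(((n : ℝ) - 1) / q)) * (Gamma (((n : ℝ) - 1) / q) / q)) := by
  have hn' : (-1 : ℝ) < n - 2 := by
    have : (2 : ℝ) ≤ n := by exact_mod_cast hn
    linarith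
  have hpow : ∀ r : ℝ, 0 < r → r ^ (n - 1) / r = r ^ ((n : ℝ) - 2) := by
    intro r hr
    rw [div_eq_iff hr.ne', ← rpow_add_one hr.ne', ← rpow_natCast, Nat.cast_sub (by omega)]
    ring_nf
  rw [setLIntegral_congr_fun measurableSet_Ioi
    (g := fun r => ENNReal.ofReal (r ^ ((n : ℝ) - 2) * exp (-b * r ^ q))) fun r (hr : 0 < r) => by
      rw [← ENNReal.ofReal_mul (by positivity)]
      dsimp only
      rw [← hpow r hr, neg_mul, mul_comm b]
      ring_nf]
  rw [← ofReal_integral_eq_lintegral_ofReal (integrableOn_rpow_mul_exp_neg_mul_rpow hn' hq hb)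
    ((ae_restrict_iff' measurableSet_Ioi).2 (ae_of_all _ fun r (hr : 0 < r) => by positivity)),
    integral_rpow_mul_exp_neg_mul_rpow hq hn' hb]
  ring_nf

section Polar

variable {E : Type*} [NormedAddCommGroup E] [NormedSpace ℝ E] [MeasurableSpace E] [BorelSpace E]
  [FiniteDimensional ℝ E] (μ : Measure E) [μ.IsAddHaarMeasure]

theorem lintegral_eq_lintegral_sphere_lintegral_Ioi [Nontrivial E] {F : E → ℝ≥0∞}
    (hF : Measurable F) :
    ∫⁻ x, F x ∂μ = ∫⁻ ω : sphere (0 : E) 1,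
      ∫⁻ r in Ioi (0 : ℝ),
        ENNReal.ofReal (r ^ (Module.finrank ℝ E - 1)) * F (r • (ω : E)) ∂volume
      ∂μ.toSphere := by
  have hFpolar :
      Measurable fun p : sphere (0 : E) 1 × Ioi (0 : ℝ) => F ((p.2 : ℝ) • (p.1 : E)) :=
    hF.comp ((continuous_subtype_val.comp continuous_snd).smul
      (continuous_subtype_val.comp continuous_fst)).measurable
  calc ∫⁻ x, F x ∂μ
      = ∫⁻ x : ({(0 : E)}ᶜ : Set E), F x ∂(μ.comap (↑)) := by
        rw [lintegral_subtype_comap (measurableSet_singleton 0).compl, restrict_compl_singleton]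
    _ = ∫⁻ p : sphere (0 : E) 1 × Ioi (0 : ℝ), F ((p.2 : ℝ) • (p.1 : E))
          ∂(μ.toSphere.prod (Measure.volumeIoiPow (Module.finrank ℝ E - 1))) := by
        rw [← μ.measurePreserving_homeomorphUnitSphereProd.lintegral_comp hFpolar]
        refine lintegral_congr fun x => congrArg F ?_
        simp [homeomorphUnitSphereProd, smul_inv_smul₀ (norm_ne_zero_iff.2 x.2)]
    _ = ∫⁻ ω : sphere (0 : E) 1, ∫⁻ r : Ioi (0 : ℝ), F ((r : ℝ) • (ω : E))
          ∂(Measure.volumeIoiPow (Module.finrank ℝ E - 1)) ∂μ.toSphere :=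
        lintegral_prod _ hFpolar.aemeasurable
    _ = _ := by
        refine lintegral_congr fun ω => ?_
        rw [Measure.volumeIoiPow, lintegral_withDensity_eq_lintegral_mul _
          (measurable_subtype_coe.pow_const _).ennreal_ofReal
          (show Measurable fun r : Ioi (0 : ℝ) => F ((r : ℝ) • (ω : E)) from
            hF.comp (measurable_subtype_coe.smul_const _))]
        exact lintegral_subtype_comap measurableSet_Ioi
          fun r : ℝ => ENNReal.ofReal (r ^ (Module.finrank ℝ E - 1)) * F (r • (ω : E))

theorem integral_exp_neg_div_norm_eq_of_homogeneous (hE : 2 ≤ Module.finrank ℝ E) {q : ℝ}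
    (hq : 0 < q) {h : E → ℝ} (hmeas : Measurable h) (hpos : ∀ x ≠ 0, 0 < h x)
    (hhom : ∀ r : ℝ, 0 ≤ r → ∀ x, h (r • x) = r ^ q * h x) :
    ∫ x, exp (-h x) / ‖x‖ ∂μ = Gamma (((Module.finrank ℝ E : ℝ) - 1) / q) / q *
        ∫ ω : sphere (0 : E) 1, h ω ^ (-(((Module.finrank ℝ E : ℝ) - 1) / q)) ∂μ.toSphere := by
  have : Nontrivial E := Module.nontrivial_of_finrank_pos (R := ℝ) (by omega)
  set s := ((Module.finrank ℝ E : ℝ) - 1) / q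
  have hE' : (2 : ℝ) ≤ Module.finrank ℝ E := by exact_mod_cast hE
  have hs : 0 < s := div_pos (by linarith) hq
  have hG : Measurable fun x => exp (-h x) / ‖x‖ := hmeas.neg.exp.div measurable_norm
  have hsph : Measurable fun ω : sphere (0 : E) 1 => h ω ^ (-s) :=
    (hmeas.comp measurable_subtype_coe).pow_const _
  have hsph_pos (ω : sphere (0 : E) 1) : 0 < h ω := hpos _ (ne_of_mem_sphere ω.2 one_ne_zero)
  have hradial (ω : sphere (0 : E) 1) :
      ∫⁻ r in Ioi (0 : ℝ), ENNReal.ofReal (r ^ (Module.finrank ℝ E - 1)) *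
        ENNReal.ofReal (exp (-h (r • (ω : E))) / ‖r • (ω : E)‖) =
      ENNReal.ofReal (h ω ^ (-s)) * ENNReal.ofReal (Gamma s / q) := by
    rw [setLIntegral_congr_fun measurableSet_Ioi fun r (hr : 0 < r) => by
      rw [hhom r hr.le, norm_smul, norm_eq_of_mem_sphere, mul_one, norm_of_nonneg hr.le],
      lintegral_Ioi_pow_mul_exp_neg_rpow_mul_div hE hq (hsph_pos ω),
      ENNReal.ofReal_mul (rpow_nonneg (hsph_pos ω).le _)]
  rw [integral_eq_lintegral_of_nonneg_ae (ae_of_all _ fun x => by positivity)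
      hG.aestronglyMeasurable,
    lintegral_eq_lintegral_sphere_lintegral_Ioi μ hG.ennreal_ofReal, lintegral_congr hradial,
    lintegral_mul_const _ hsph.ennreal_ofReal, ENNReal.toReal_mul,
    ENNReal.toReal_ofReal (div_pos (Gamma_pos_of_pos hs) hq).le,
    ← integral_eq_lintegral_of_nonneg_ae (ae_of_all _ fun ω => (rpow_nonneg (hsph_pos ω).le _))
      hsph.aestronglyMeasurable, mul_comm]

end Polar

section RowNorms

variable {ι κ : Type*} [Fintype ι] [Fintype κ]

noncomputable def sumRowNormRpow (q : ℝ) (x : EuclideanSpace ℝ (ι × κ)) : ℝ :=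
  ∑ i, ‖EuclideanSpace.curryMeasurableEquiv ι κ x i‖ ^ q

theorem measurable_sumRowNormRpow (q : ℝ) :
    Measurable (sumRowNormRpow q : EuclideanSpace ℝ (ι × κ) → ℝ) :=
  Finset.measurable_sum _ fun i _ => ((measurable_pi_apply i).comp
    (EuclideanSpace.curryMeasurableEquiv ι κ).measurable).norm.pow_const q

theorem sumRowNormRpow_nonneg (q : ℝ) (x : EuclideanSpace ℝ (ι × κ)) :
    0 ≤ sumRowNormRpow q x :=
  Finset.sum_nonneg fun _ _ => rpow_nonneg (norm_nonneg _) _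

theorem sumRowNormRpow_pos (q : ℝ) {x : EuclideanSpace ℝ (ι × κ)} (hx : x ≠ 0) :
    0 < sumRowNormRpow q x := by
  obtain ⟨i, hi⟩ :=
    Function.ne_iff.mp ((EuclideanSpace.curryMeasurableEquiv ι κ).injective.ne hx)
  exact Finset.sum_pos' (fun _ _ => rpow_nonneg (norm_nonneg _) _)
    ⟨i, Finset.mem_univ _, rpow_pos_of_pos (norm_pos_iff.2 hi) _⟩

theorem sumRowNormRpow_smul (q : ℝ) {r : ℝ} (hr : 0 ≤ r) (x : EuclideanSpace ℝ (ι × κ)) :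
    sumRowNormRpow q (r • x) = r ^ q * sumRowNormRpow q x := by
  simp only [sumRowNormRpow, EuclideanSpace.curryMeasurableEquiv_smul, Pi.smul_apply, norm_smul,
    norm_of_nonneg hr, mul_rpow hr (norm_nonneg _), Finset.mul_sum]

theorem rpow_neg_div_sum_mul_sqrt_sum_sq {q : ℝ} (hq : q ≠ 0) {a : ℝ} (ha : 0 ≤ a) (p : ℝ)
    (x : EuclideanSpace ℝ (ι × κ)) :
    (∑ i, (a * √(∑ j, x (i, j) ^ 2)) ^ q) ^ (-p / q) =
      a ^ (-p) * sumRowNormRpow q x ^ (-p / q) := by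
  simp_rw [← EuclideanSpace.norm_curryMeasurableEquiv_apply, mul_rpow ha (norm_nonneg _),
    ← Finset.mul_sum]
  change (a ^ q * sumRowNormRpow q x) ^ (-p / q) = _
  rw [mul_rpow (rpow_nonneg ha _) (sumRowNormRpow_nonneg q x), ← rpow_mul ha,
    mul_div_cancel₀ _ hq]

theorem integral_prod_exp_div_sqrt_sum_norm_sq (q c : ℝ) :
    ∫ W : ι → EuclideanSpace ℝ κ, (∏ i, exp (-‖W i‖ ^ q) / c) / √(∑ i, ‖W i‖ ^ 2) =
      (c ^ Fintype.card ι)⁻¹ *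
        ∫ x : EuclideanSpace ℝ (ι × κ), exp (-sumRowNormRpow q x) / ‖x‖ := by
  rw [← EuclideanSpace.measurePreserving_curryMeasurableEquiv.integral_comp
    (MeasurableEquiv.measurableEmbedding _), ← integral_const_mul]
  congr 1 with x
  rw [EuclideanSpace.sum_norm_curryMeasurableEquiv_sq, sqrt_sq (norm_nonneg _),
    Finset.prod_div_distrib, Finset.prod_const, ← exp_sum, Finset.sum_neg_distrib,
    sumRowNormRpow, Finset.card_univ]
  ring

end RowNorms

theorem normalization_constant_full_space_general (d N : ℕ)
    (α : ℝ) (hα : 0 < α) (hdN : 1 < d * N)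
    (c : ℝ)
    (g : EuclideanSpace ℝ (Fin d) → ℝ)
    (hg : ∀ w, g w = Real.exp (-‖w‖ ^ (2 + α)) / c) :
    c ^ (-(N : ℤ)) *
      ((Real.sqrt N) ^ (d * N - 1) *
        ∫ ω : Metric.sphere (0 : EuclideanSpace ℝ (Fin N × Fin d)) 1,
          (∑ i : Fin N,
            (Real.sqrt N *
              Real.sqrt (∑ j, ((ω : EuclideanSpace ℝ (Fin N × Fin d)) (i, j)) ^ 2)) ^
              (2 + α)) ^ (-((d * N : ℝ) - 1) / (2 + α)) ∂volume.toSphere) =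
      ((2 + α) / Real.Gamma (((d * N : ℝ) - 1) / (2 + α))) *
        ∫ W : Fin N → EuclideanSpace ℝ (Fin d),
          (∏ i, g (W i)) / Real.sqrt (∑ i, ‖W i‖ ^ 2) := by
  have hq : 0 < 2 + α := by positivity
  have hN : 0 < √(N : ℝ) :=
    sqrt_pos.2 (Nat.cast_pos.2 (Nat.pos_of_ne_zero (by rintro rfl; simp at hdN)))
  have hfinrank : Module.finrank ℝ (EuclideanSpace ℝ (Fin N × Fin d)) = d * N := by
    simp [mul_comm]
  have hpow : √(N : ℝ) ^ (d * N - 1) = √(N : ℝ) ^ ((d * N : ℝ) - 1) := by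
    rw [← rpow_natCast, Nat.cast_sub hdN.le, Nat.cast_mul, Nat.cast_one]
  simp_rw [hg, rpow_neg_div_sum_mul_sqrt_sum_sq hq.ne' hN.le]
  rw [integral_prod_exp_div_sqrt_sum_norm_sq, integral_const_mul,
    ← mul_assoc (√(N : ℝ) ^ (d * N - 1)), hpow,
    ← rpow_add hN, add_neg_cancel, rpow_zero, one_mul,
    integral_exp_neg_div_norm_eq_of_homogeneous volume (hfinrank ▸ hdN) hq
      (measurable_sumRowNormRpow _) (fun _ => sumRowNormRpow_pos _)
      (fun _ hr => sumRowNormRpow_smul _ hr), hfinrank]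
  have hdN' : (2 : ℝ) ≤ d * N := by exact_mod_cast hdN
  have hΓ := Gamma_pos_of_pos (div_pos (by linarith : (0 : ℝ) < d * N - 1) hq)
  rw [zpow_neg, zpow_natCast, Fintype.card_fin, Nat.cast_mul, neg_div]
  field_simp

/-- Normalization constant as a full-space integral:
`Z_N := c^{-N} ∫_{S^{dN-1}(√N)} (Σ |v_i|^{2+α})^{-(dN-1)/(2+α)} dσ`
equals `((2+α)/Γ((dN-1)/(2+α))) ∫_{ℝ^{dN}} (∏ g(w_i))/|W| dW`, where
`g = e^{-|w|^{2+α}}/c`.  The sphere integral is written via the uniform surface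
measure on the unit sphere and scaling by the radius `√N`. -/
theorem normalization_constant_full_space (d N : ℕ) (hd : 1 ≤ d) (hN : 1 ≤ N)
    (α : ℝ) (hα : 0 < α) (hdN : 1 < d * N)
    (c : ℝ) (hc : c = ∫ w : EuclideanSpace ℝ (Fin d), Real.exp (-‖w‖ ^ (2 + α)))
    (g : EuclideanSpace ℝ (Fin d) → ℝ)
    (hg : ∀ w, g w = Real.exp (-‖w‖ ^ (2 + α)) / c) :
    c ^ (-(N : ℤ)) *
      ((Real.sqrt N) ^ (d * N - 1) *
        ∫ ω : Metric.sphere (0 : EuclideanSpace ℝ (Fin N × Fin d)) 1,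
          (∑ i : Fin N,
            (Real.sqrt N *
              Real.sqrt (∑ j, ((ω : EuclideanSpace ℝ (Fin N × Fin d)) (i, j)) ^ 2)) ^
              (2 + α)) ^ (-((d * N : ℝ) - 1) / (2 + α)) ∂volume.toSphere) =
      ((2 + α) / Real.Gamma (((d * N : ℝ) - 1) / (2 + α))) *
        ∫ W : Fin N → EuclideanSpace ℝ (Fin d),
          (∏ i, g (W i)) / Real.sqrt (∑ i, ‖W i‖ ^ 2) :=
  normalization_constant_full_space_general d N α hα hdN c g hg
end
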